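/- For d ≥ 1, let Ψ₀ and Ψ₁ be the super-operators from d×d matrices to (d+1)×(d+1) matrices defined by: Ψ₀[X] has (Tr(X)·I_d + Xᵀ)/(d+1) as its top-left d×d block and zeros elsewhere; Ψ₁[X] has (Tr(X)·I_d − Xᵀ)/(d+1) as its top-left d×d block, 2·Tr(X)/(d+1) in the bottom-right corner entry, and zeros elsewhere. Then for every state ρ on ℂ^d, ‖Ψ₀[ρ] − Ψ₁[ρ]‖_tr = 4/(d+1). In particular, sup { ‖Ψ₀[τ] − Ψ₁[τ]‖_tr : τ a state on ℂ^d } = 4/(d+1). -/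

import Mathlib

open scoped Kronecker ComplexOrder Matrix

namespace ChannelDiscrimination

/-- The trace norm `Tr √(Aᴴ A)` of a complex square matrix. -/
noncomputable def traceNorm {ι : Type*} [Fintype ι] [DecidableEq ι]
    (A : Matrix ι ι ℂ) : ℝ :=
  ((Matrix.posSemidef_conjTranspose_mul_self A).1.eigenvectorUnitary.1 *
      Matrix.diagonal (((↑) : ℝ → ℂ) ∘ (√·) ∘ (Matrix.posSemidef_conjTranspose_mul_self A).1.eigenvalues) *
      (star (Matrix.posSemidef_conjTranspose_mul_self A).1.eigenvectorUnitary :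
        Matrix ι ι ℂ)).trace.re

/-- A state: a positive semidefinite matrix of trace one. -/
def IsState {ι : Type*} [Fintype ι] (ρ : Matrix ι ι ℂ) : Prop :=
  ρ.PosSemidef ∧ ρ.trace = 1

/-- Separability of a bipartite matrix on `ℂ^m ⊗ ℂ^n`. -/
def IsSeparable {m n : ℕ} (σ : Matrix (Fin m × Fin n) (Fin m × Fin n) ℂ) : Prop :=
  ∃ (N : ℕ) (p : Fin N → ℝ) (ρ : Fin N → Matrix (Fin m) (Fin m) ℂ)
    (τ : Fin N → Matrix (Fin n) (Fin n) ℂ),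
    (∀ i, 0 ≤ p i) ∧ (∑ i, p i = 1) ∧ (∀ i, IsState (ρ i)) ∧ (∀ i, IsState (τ i)) ∧
    σ = ∑ i, (p i : ℂ) • (ρ i ⊗ₖ τ i)

/-- `Φ ⊗ id_n` for a super-operator `Φ` from `m×m` to `k×k` matrices. -/
def tensorId {m k : ℕ} (n : ℕ)
    (Φ : Matrix (Fin m) (Fin m) ℂ →ₗ[ℂ] Matrix (Fin k) (Fin k) ℂ) :
    Matrix (Fin m × Fin n) (Fin m × Fin n) ℂ →ₗ[ℂ]
      Matrix (Fin k × Fin n) (Fin k × Fin n) ℂ where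
  toFun M := Matrix.of fun p q => Φ (Matrix.of fun i j => M (i, p.2) (j, q.2)) p.1 q.1
  map_add' M N := by
    ext p q
    show Φ ((Matrix.of fun i j => M (i, p.2) (j, q.2)) +
        (Matrix.of fun i j => N (i, p.2) (j, q.2))) p.1 q.1 = _
    rw [map_add]
    rfl
  map_smul' c M := by
    ext p q
    show Φ (c • (Matrix.of fun i j => M (i, p.2) (j, q.2))) p.1 q.1 = _
    rw [map_smul]
    rfl

/-- A positive super-operator. -/
def IsPositiveMap {m k : ℕ}
    (Φ : Matrix (Fin m) (Fin m) ℂ →ₗ[ℂ] Matrix (Fin k) (Fin k) ℂ) : Prop :=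
  ∀ X : Matrix (Fin m) (Fin m) ℂ, X.PosSemidef → (Φ X).PosSemidef

/-- A trace-preserving super-operator. -/
def IsTracePreserving {m k : ℕ}
    (Φ : Matrix (Fin m) (Fin m) ℂ →ₗ[ℂ] Matrix (Fin k) (Fin k) ℂ) : Prop :=
  ∀ X : Matrix (Fin m) (Fin m) ℂ, (Φ X).trace = X.trace

/-- A completely positive super-operator: `Φ ⊗ id_n` is positive for every `n`. -/
def IsCompletelyPositive {m k : ℕ}
    (Φ : Matrix (Fin m) (Fin m) ℂ →ₗ[ℂ] Matrix (Fin k) (Fin k) ℂ) : Prop :=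
  ∀ (n : ℕ) (M : Matrix (Fin m × Fin n) (Fin m × Fin n) ℂ),
    M.PosSemidef → (tensorId n Φ M).PosSemidef

/-- A (quantum) channel: completely positive and trace-preserving. -/
def IsChannel {m k : ℕ}
    (Φ : Matrix (Fin m) (Fin m) ℂ →ₗ[ℂ] Matrix (Fin k) (Fin k) ℂ) : Prop :=
  IsCompletelyPositive Φ ∧ IsTracePreserving Φ

/-- An entanglement-breaking channel. -/
def IsEntanglementBreaking {m k : ℕ}
    (Φ : Matrix (Fin m) (Fin m) ℂ →ₗ[ℂ] Matrix (Fin k) (Fin k) ℂ) : Prop :=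
  IsChannel Φ ∧ ∀ (n : ℕ) (ρ : Matrix (Fin m × Fin n) (Fin m × Fin n) ℂ),
    IsState ρ → IsSeparable (tensorId n Φ ρ)

/-- `pad1 M c` is the `(k+1)×(k+1)` matrix with `M` as its top-left `k×k` block,
`c` in the bottom-right corner, and zeros elsewhere. -/
def pad1 {k : ℕ} (M : Matrix (Fin k) (Fin k) ℂ) (c : ℂ) :
    Matrix (Fin (k + 1)) (Fin (k + 1)) ℂ :=
  Matrix.of fun a b =>
    Fin.lastCases (Fin.lastCases c (fun _ => 0) b)
      (fun i => Fin.lastCases 0 (fun j => M i j) b) a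

/-- Partial transpose on the first tensor factor. -/
def ptransposeFst {d n : ℕ} (ρ : Matrix (Fin d × Fin n) (Fin d × Fin n) ℂ) :
    Matrix (Fin d × Fin n) (Fin d × Fin n) ℂ :=
  Matrix.of fun p q => ρ (q.1, p.2) (p.1, q.2)

/-!
The difference `Ψ₀[ρ] − Ψ₁[ρ]` is block diagonal with blocks `(2/(d+1)) ρᵀ ≥ 0` and
`−2/(d+1)`. Its absolute value `√(DᴴD)` is therefore the block-diagonal matrix with blocks
`(2/(d+1)) ρᵀ` and `2/(d+1)`, whose trace is `4/(d+1)` for every state `ρ`; the supremum is that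
of a constant function on the nonempty set of states.
-/

open scoped MatrixOrder

section pad1

variable {k : ℕ}

@[simp] lemma pad1_castSucc_castSucc (M : Matrix (Fin k) (Fin k) ℂ) (c : ℂ) (i j : Fin k) :
    pad1 M c i.castSucc j.castSucc = M i j := by simp [pad1]

@[simp] lemma pad1_castSucc_last (M : Matrix (Fin k) (Fin k) ℂ) (c : ℂ) (i : Fin k) :
    pad1 M c i.castSucc (Fin.last k) = 0 := by simp [pad1]

@[simp] lemma pad1_last_castSucc (M : Matrix (Fin k) (Fin k) ℂ) (c : ℂ) (j : Fin k) :
    pad1 M c (Fin.last k) j.castSucc = 0 := by simp [pad1]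

@[simp] lemma pad1_last_last (M : Matrix (Fin k) (Fin k) ℂ) (c : ℂ) :
    pad1 M c (Fin.last k) (Fin.last k) = c := by simp [pad1]

lemma pad1_sub (M N : Matrix (Fin k) (Fin k) ℂ) (c e : ℂ) :
    pad1 M c - pad1 N e = pad1 (M - N) (c - e) := by
  ext a b
  induction a using Fin.lastCases <;> induction b using Fin.lastCases <;> simp

lemma pad1_mul (M N : Matrix (Fin k) (Fin k) ℂ) (c e : ℂ) :
    pad1 M c * pad1 N e = pad1 (M * N) (c * e) := by
  ext a b
  induction a using Fin.lastCases <;> induction b using Fin.lastCases <;>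
    simp [Matrix.mul_apply, Fin.sum_univ_castSucc]

lemma pad1_conjTranspose (M : Matrix (Fin k) (Fin k) ℂ) (c : ℂ) :
    (pad1 M c)ᴴ = pad1 Mᴴ (star c) := by
  ext a b
  induction a using Fin.lastCases <;> induction b using Fin.lastCases <;> simp

lemma trace_pad1 (M : Matrix (Fin k) (Fin k) ℂ) (c : ℂ) :
    (pad1 M c).trace = M.trace + c := by
  simp [Matrix.trace, Fin.sum_univ_castSucc]

lemma posSemidef_pad1 {M : Matrix (Fin k) (Fin k) ℂ} {c : ℂ} (hM : M.PosSemidef) (hc : 0 ≤ c) :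
    (pad1 M c).PosSemidef := by
  obtain ⟨B, rfl⟩ := CStarAlgebra.nonneg_iff_eq_star_mul_self.mp hM.nonneg
  obtain ⟨s, rfl⟩ := CStarAlgebra.nonneg_iff_eq_star_mul_self.mp hc
  rw [Matrix.star_eq_conjTranspose, ← pad1_mul, ← pad1_conjTranspose]
  exact Matrix.posSemidef_conjTranspose_mul_self _

end pad1

section traceNorm

variable {ι : Type*} [Fintype ι] [DecidableEq ι]

lemma traceNorm_eq_re_trace_cfc_sqrt (A : Matrix ι ι ℂ) :
    traceNorm A = (cfc Real.sqrt (Aᴴ * A)).trace.re := by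
  rw [(Matrix.posSemidef_conjTranspose_mul_self A).1.cfc_eq, Matrix.IsHermitian.cfc,
    Unitary.conjStarAlgAut_apply]
  rfl

lemma traceNorm_eq_re_trace_of_mul_self_eq {A S : Matrix ι ι ℂ} (hS : S.PosSemidef)
    (hSA : S * S = Aᴴ * A) : traceNorm A = S.trace.re := by
  have hSS : 0 ≤ S * S := hSA ▸ (Matrix.posSemidef_conjTranspose_mul_self A).nonneg
  rw [traceNorm_eq_re_trace_cfc_sqrt, ← hSA, ← cfcₙ_eq_cfc, ← CFC.sqrt_eq_real_sqrt _ hSS,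
    CFC.sqrt_mul_self S hS.nonneg]

end traceNorm

lemma traceNorm_pad1 {k : ℕ} {M : Matrix (Fin k) (Fin k) ℂ} (hM : M.PosSemidef) (c : ℂ) :
    traceNorm (pad1 M c) = M.trace.re + ‖c‖ := by
  have hS : (pad1 M ‖c‖).PosSemidef := posSemidef_pad1 hM (by positivity)
  have hsq : pad1 M ‖c‖ * pad1 M ‖c‖ = (pad1 M c)ᴴ * pad1 M c := by
    rw [pad1_conjTranspose, pad1_mul, pad1_mul, hM.1.eq, Complex.star_def, Complex.conj_mul', sq]
  rw [traceNorm_eq_re_trace_of_mul_self_eq hS hsq, trace_pad1, Complex.add_re, Complex.ofReal_re]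

lemma exists_isState {ι : Type*} [Fintype ι] [DecidableEq ι] [Nonempty ι] :
    ∃ ρ : Matrix ι ι ℂ, IsState ρ := by
  obtain ⟨i⟩ := ‹Nonempty ι›
  refine ⟨Matrix.diagonal (Pi.single i 1), Matrix.PosSemidef.diagonal ?_, by simp⟩
  exact Pi.single_nonneg.mpr zero_le_one

/-- For the transposition channels `Ψ₀, Ψ₁`, every state `ρ` on `ℂ^d` satisfies
`‖Ψ₀[ρ] − Ψ₁[ρ]‖_tr = 4/(d+1)`, so the supremum over states equals `4/(d+1)`. -/
theorem transposition_channels_trace_distance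
    {d : ℕ} (hd : 1 ≤ d)
    (Ψ₀ Ψ₁ : Matrix (Fin d) (Fin d) ℂ →ₗ[ℂ] Matrix (Fin (d + 1)) (Fin (d + 1)) ℂ)
    (hΨ₀ : ∀ X : Matrix (Fin d) (Fin d) ℂ,
      Ψ₀ X = pad1 (((d : ℂ) + 1)⁻¹ • (X.trace • (1 : Matrix (Fin d) (Fin d) ℂ) + Xᵀ)) 0)
    (hΨ₁ : ∀ X : Matrix (Fin d) (Fin d) ℂ,
      Ψ₁ X = pad1 (((d : ℂ) + 1)⁻¹ • (X.trace • (1 : Matrix (Fin d) (Fin d) ℂ) - Xᵀ))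
        (2 * X.trace / ((d : ℂ) + 1))) :
    (∀ ρ : Matrix (Fin d) (Fin d) ℂ, IsState ρ →
        traceNorm (Ψ₀ ρ - Ψ₁ ρ) = 4 / ((d : ℝ) + 1)) ∧
      sSup {x : ℝ | ∃ τ : Matrix (Fin d) (Fin d) ℂ, IsState τ ∧
        x = traceNorm (Ψ₀ τ - Ψ₁ τ)} = 4 / ((d : ℝ) + 1) := by
  set r : ℝ := 2 / ((d : ℝ) + 1) with hr
  have hdiff (X : Matrix (Fin d) (Fin d) ℂ) :
      Ψ₀ X - Ψ₁ X = pad1 ((r : ℂ) • Xᵀ) (-(r * X.trace)) := by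
    rw [hΨ₀, hΨ₁, pad1_sub, hr]
    push_cast
    congr 1
    · module
    · ring
  have hconst (ρ : Matrix (Fin d) (Fin d) ℂ) (hρ : IsState ρ) :
      traceNorm (Ψ₀ ρ - Ψ₁ ρ) = 4 / ((d : ℝ) + 1) := by
    have hr0 : 0 ≤ r := by positivity
    rw [hdiff, traceNorm_pad1 (hρ.1.transpose.smul (Complex.zero_le_real.mpr hr0)),
      Matrix.trace_smul, Matrix.trace_transpose, hρ.2]
    simp only [smul_eq_mul, mul_one, Complex.ofReal_re, norm_neg, Complex.norm_real,
      Real.norm_eq_abs, abs_of_nonneg hr0]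
    ring
  refine ⟨hconst, ?_⟩
  have : Nonempty (Fin d) := ⟨⟨0, hd⟩⟩
  obtain ⟨τ, hτ⟩ := exists_isState (ι := Fin d)
  suffices hset : {x : ℝ | ∃ τ : Matrix (Fin d) (Fin d) ℂ, IsState τ ∧
      x = traceNorm (Ψ₀ τ - Ψ₁ τ)} = {4 / ((d : ℝ) + 1)} by
    rw [hset, csSup_singleton]
  refine Set.eq_singleton_iff_unique_mem.mpr ⟨⟨τ, hτ, (hconst τ hτ).symm⟩, ?_⟩
  rintro x ⟨ρ, hρ, rfl⟩
  exact hconst ρ hρ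

end ChannelDiscrimination
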